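/- Let A ∈ ℝ^{n×n}, x₀ ∈ ℝⁿ, T > 0, and set x(t) = exp(tA) x₀. Define the Gram matrix Σ ∈ ℝ^{n×n} by Σ_{ij} = ∫₀ᵀ x_i(t) x_j(t) dt. Then A is identifiable from x₀ if and only if Σ is invertible. -/

import Mathlib

open MeasureTheory

/-- `A` is *identifiable from* the initial condition `x₀` if no other matrix `B ≠ A`
produces the same solution trajectory `t ↦ exp (t • B) *ᵥ x₀` of the linear ODE. -/
def IdentifiableFrom {n : ℕ} (A : Matrix (Fin n) (Fin n) ℝ) (x₀ : Fin n → ℝ) : Prop :=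
  ¬ ∃ B : Matrix (Fin n) (Fin n) ℝ, B ≠ A ∧
      ∀ t : ℝ, (NormedSpace.exp (t • B)).mulVec x₀ = (NormedSpace.exp (t • A)).mulVec x₀

/-- `A` is *globally unidentifiable* if it is not identifiable from any initial condition. -/
def GloballyUnidentifiable {n : ℕ} (A : Matrix (Fin n) (Fin n) ℝ) : Prop :=
  ∀ x₀ : Fin n → ℝ, ¬ IdentifiableFrom A x₀

section aux
open NormedSpace Matrix Set

variable {n : ℕ}

/-- `M ↦ M *ᵥ x₀` as a continuous linear map. -/
noncomputable def mulVecCLM (x₀ : Fin n → ℝ) :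
    Matrix (Fin n) (Fin n) ℝ →L[ℝ] (Fin n → ℝ) :=
  LinearMap.toContinuousLinearMap
    { toFun := fun M => M *ᵥ x₀
      map_add' := fun M N => Matrix.add_mulVec M N x₀
      map_smul' := fun a M => Matrix.smul_mulVec a M x₀ }

@[simp] lemma mulVecCLM_apply (x₀ : Fin n → ℝ) (M : Matrix (Fin n) (Fin n) ℝ) :
    mulVecCLM x₀ M = M *ᵥ x₀ := rfl

/-- `w ↦ v ⬝ᵥ w` as a continuous linear map. -/
noncomputable def dotCLM (v : Fin n → ℝ) : (Fin n → ℝ) →L[ℝ] ℝ :=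
  LinearMap.toContinuousLinearMap
    { toFun := fun w => v ⬝ᵥ w
      map_add' := fun a b => dotProduct_add v a b
      map_smul' := fun c w => dotProduct_smul c v w }

@[simp] lemma dotCLM_apply (v w : Fin n → ℝ) : dotCLM v w = v ⬝ᵥ w := rfl

lemma hasDerivAt_traj (A : Matrix (Fin n) (Fin n) ℝ) (x₀ : Fin n → ℝ) (t : ℝ) :
    HasDerivAt (fun s : ℝ => (NormedSpace.exp (s • A)) *ᵥ x₀)
      ((A * NormedSpace.exp (t • A)) *ᵥ x₀) t := by
  letI : SeminormedRing (Matrix (Fin n) (Fin n) ℝ) := Matrix.linftyOpSemiNormedRing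
  letI : NormedRing (Matrix (Fin n) (Fin n) ℝ) := Matrix.linftyOpNormedRing
  letI : NormedAlgebra ℝ (Matrix (Fin n) (Fin n) ℝ) := Matrix.linftyOpNormedAlgebra
  have h := hasDerivAt_exp_smul_const' (𝕂 := ℝ) A t
  exact ((mulVecCLM x₀).hasFDerivAt.comp_hasDerivAt t h)

lemma continuous_traj (A : Matrix (Fin n) (Fin n) ℝ) (x₀ : Fin n → ℝ) :
    Continuous fun t : ℝ => (NormedSpace.exp (t • A)) *ᵥ x₀ :=
  continuous_iff_continuousAt.2 fun t => (hasDerivAt_traj A x₀ t).continuousAt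

lemma analytic_dot (A : Matrix (Fin n) (Fin n) ℝ) (x₀ v : Fin n → ℝ) :
    AnalyticOnNhd ℝ (fun t : ℝ => v ⬝ᵥ ((NormedSpace.exp (t • A)) *ᵥ x₀)) Set.univ := by
  letI : SeminormedRing (Matrix (Fin n) (Fin n) ℝ) := Matrix.linftyOpSemiNormedRing
  letI : NormedRing (Matrix (Fin n) (Fin n) ℝ) := Matrix.linftyOpNormedRing
  letI : NormedAlgebra ℝ (Matrix (Fin n) (Fin n) ℝ) := Matrix.linftyOpNormedAlgebra
  intro t _
  have h1 : AnalyticAt ℝ (NormedSpace.exp : Matrix (Fin n) (Fin n) ℝ → _) (t • A) := by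
    apply analyticAt_exp_of_mem_ball
    rw [expSeries_radius_eq_top]
    exact edist_lt_top _ _
  have h2 : AnalyticAt ℝ (fun s : ℝ => s • A) t :=
    ((ContinuousLinearMap.id ℝ ℝ).smulRight A).analyticAt t
  have h3 : AnalyticAt ℝ (fun s : ℝ => NormedSpace.exp (s • A)) t :=
    AnalyticAt.comp (f := fun s : ℝ => s • A) h1 h2
  exact AnalyticAt.comp (f := fun s : ℝ => NormedSpace.exp (s • A))
    ((((dotCLM v).comp (mulVecCLM x₀))).analyticAt _) h3

end aux

section aux2
open NormedSpace Matrix Set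

variable {n : ℕ}

lemma eq_zero_on_Ioo_of_ae {f : ℝ → ℝ} {T : ℝ} (hf : Continuous f)
    (h : f =ᵐ[volume.restrict (Set.Ioc (0:ℝ) T)] 0) :
    ∀ t ∈ Set.Ioo (0:ℝ) T, f t = 0 := by
  intro t ht
  by_contra hne
  have hmeas : MeasurableSet {s : ℝ | f s ≠ 0} :=
    (hf.measurable (measurableSet_singleton (0:ℝ))).compl
  have h0 : volume ({s : ℝ | f s ≠ 0} ∩ Set.Ioc 0 T) = 0 := by
    have h2 : (volume.restrict (Set.Ioc (0:ℝ) T)) {s : ℝ | f s ≠ 0} = 0 := by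
      simpa using MeasureTheory.ae_iff.mp h
    rwa [Measure.restrict_apply hmeas] at h2
  have hsopen : IsOpen ({s : ℝ | f s ≠ 0} ∩ Set.Ioo 0 T) :=
    (isOpen_compl_singleton.preimage hf).inter isOpen_Ioo
  have hpos : 0 < volume ({s : ℝ | f s ≠ 0} ∩ Set.Ioo 0 T) :=
    hsopen.measure_pos volume ⟨t, hne, ht⟩
  have hle : volume ({s : ℝ | f s ≠ 0} ∩ Set.Ioo 0 T) ≤
      volume ({s : ℝ | f s ≠ 0} ∩ Set.Ioc 0 T) :=
    measure_mono (Set.inter_subset_inter_right _ Set.Ioo_subset_Ioc_self)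
  rw [h0] at hle
  exact absurd (le_antisymm hle zero_le) hpos.ne'

lemma dot_traj_eq_zero_everywhere {A : Matrix (Fin n) (Fin n) ℝ} {x₀ v : Fin n → ℝ} {T : ℝ}
    (hT : 0 < T)
    (h : ∀ t ∈ Set.Ioo (0:ℝ) T, v ⬝ᵥ ((NormedSpace.exp (t • A)) *ᵥ x₀) = 0) :
    ∀ t : ℝ, v ⬝ᵥ ((NormedSpace.exp (t • A)) *ᵥ x₀) = 0 := by
  have han := analytic_dot A x₀ v
  have hmem : Set.Ioo (0:ℝ) T ∈ nhds (T/2) := by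
    exact isOpen_Ioo.mem_nhds ⟨by linarith, by linarith⟩
  have hev : (fun t : ℝ => v ⬝ᵥ ((NormedSpace.exp (t • A)) *ᵥ x₀)) =ᶠ[nhds (T/2)] 0 :=
    Filter.eventuallyEq_iff_exists_mem.2 ⟨_, hmem, fun s hs => h s hs⟩
  have := han.eqOn_zero_of_preconnected_of_eventuallyEq_zero isPreconnected_univ
    (Set.mem_univ (T/2)) hev
  exact fun t => this (Set.mem_univ t)

end aux2

section aux3
open NormedSpace Matrix Set intervalIntegral

variable {n : ℕ}

lemma continuous_traj_coord (A : Matrix (Fin n) (Fin n) ℝ) (x₀ : Fin n → ℝ) (i : Fin n) :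
    Continuous fun t : ℝ => ((NormedSpace.exp (t • A)) *ᵥ x₀) i :=
  (continuous_apply i).comp (continuous_traj A x₀)

lemma continuous_dot_traj (A : Matrix (Fin n) (Fin n) ℝ) (x₀ v : Fin n → ℝ) :
    Continuous fun t : ℝ => v ⬝ᵥ ((NormedSpace.exp (t • A)) *ᵥ x₀) :=
  (dotCLM v).continuous.comp (continuous_traj A x₀)

lemma gram_mulVec (A : Matrix (Fin n) (Fin n) ℝ) (x₀ : Fin n → ℝ) (T : ℝ) (v : Fin n → ℝ) :
    (Matrix.of fun i j : Fin n =>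
        ∫ t in (0:ℝ)..T,
          (NormedSpace.exp (t • A)).mulVec x₀ i
            * (NormedSpace.exp (t • A)).mulVec x₀ j) *ᵥ v
      = fun i => ∫ t in (0:ℝ)..T,
          (NormedSpace.exp (t • A)).mulVec x₀ i
            * (v ⬝ᵥ ((NormedSpace.exp (t • A)) *ᵥ x₀)) := by
  funext i
  simp only [Matrix.mulVec, dotProduct, Matrix.of_apply]
  calc ∑ j, (∫ t in (0:ℝ)..T, (NormedSpace.exp (t • A)).mulVec x₀ i
          * (NormedSpace.exp (t • A)).mulVec x₀ j) * v j
      = ∑ j, ∫ t in (0:ℝ)..T, ((NormedSpace.exp (t • A)).mulVec x₀ i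
          * (NormedSpace.exp (t • A)).mulVec x₀ j) * v j :=
        Finset.sum_congr rfl fun j _ => (intervalIntegral.integral_mul_const _ _).symm
    _ = ∫ t in (0:ℝ)..T, ∑ j, ((NormedSpace.exp (t • A)).mulVec x₀ i
          * (NormedSpace.exp (t • A)).mulVec x₀ j) * v j := by
        refine (intervalIntegral.integral_finset_sum fun j _ => ?_).symm
        exact (((continuous_traj_coord A x₀ i).mul (continuous_traj_coord A x₀ j)).mul
          continuous_const).intervalIntegrable _ _
    _ = ∫ t in (0:ℝ)..T, (NormedSpace.exp (t • A)).mulVec x₀ i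
          * ∑ j, v j * (NormedSpace.exp (t • A)).mulVec x₀ j := by
        refine intervalIntegral.integral_congr fun t _ => ?_
        rw [Finset.mul_sum]
        exact Finset.sum_congr rfl fun j _ => by ring

end aux3

section aux4
open NormedSpace Matrix Set

variable {n : ℕ}

lemma dot_gram (A : Matrix (Fin n) (Fin n) ℝ) (x₀ : Fin n → ℝ) (T : ℝ) (v : Fin n → ℝ) :
    v ⬝ᵥ ((Matrix.of fun i j : Fin n =>
        ∫ t in (0:ℝ)..T,
          (NormedSpace.exp (t • A)).mulVec x₀ i
            * (NormedSpace.exp (t • A)).mulVec x₀ j) *ᵥ v)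
      = ∫ t in (0:ℝ)..T,
          (v ⬝ᵥ ((NormedSpace.exp (t • A)) *ᵥ x₀))
            * (v ⬝ᵥ ((NormedSpace.exp (t • A)) *ᵥ x₀)) := by
  rw [gram_mulVec]
  simp only [dotProduct]
  calc ∑ i, v i * ∫ t in (0:ℝ)..T, ((NormedSpace.exp (t • A)).mulVec x₀) i
          * (v ⬝ᵥ ((NormedSpace.exp (t • A)) *ᵥ x₀))
      = ∑ i, ∫ t in (0:ℝ)..T, v i * (((NormedSpace.exp (t • A)).mulVec x₀) i
          * (v ⬝ᵥ ((NormedSpace.exp (t • A)) *ᵥ x₀))) :=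
        Finset.sum_congr rfl fun i _ => (intervalIntegral.integral_const_mul _ _).symm
    _ = ∫ t in (0:ℝ)..T, ∑ i, v i * (((NormedSpace.exp (t • A)).mulVec x₀) i
          * (v ⬝ᵥ ((NormedSpace.exp (t • A)) *ᵥ x₀))) := by
        refine (intervalIntegral.integral_finset_sum fun i _ => ?_).symm
        exact (continuous_const.mul ((continuous_traj_coord A x₀ i).mul
          (continuous_dot_traj A x₀ v))).intervalIntegrable _ _
    _ = ∫ t in (0:ℝ)..T, (v ⬝ᵥ ((NormedSpace.exp (t • A)) *ᵥ x₀))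
          * (v ⬝ᵥ ((NormedSpace.exp (t • A)) *ᵥ x₀)) := by
        refine intervalIntegral.integral_congr fun t _ => ?_
        simp only [dotProduct, Finset.sum_mul]
        exact Finset.sum_congr rfl fun i _ => by ring

lemma dot_traj_zero_of_gram_mulVec_zero {A : Matrix (Fin n) (Fin n) ℝ} {x₀ v : Fin n → ℝ}
    {T : ℝ} (hT : 0 < T)
    (hv : (Matrix.of fun i j : Fin n =>
        ∫ t in (0:ℝ)..T,
          (NormedSpace.exp (t • A)).mulVec x₀ i
            * (NormedSpace.exp (t • A)).mulVec x₀ j) *ᵥ v = 0) :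
    ∀ t : ℝ, v ⬝ᵥ ((NormedSpace.exp (t • A)) *ᵥ x₀) = 0 := by
  set g : ℝ → ℝ := fun t => v ⬝ᵥ ((NormedSpace.exp (t • A)) *ᵥ x₀) with hg
  have hgc : Continuous g := continuous_dot_traj A x₀ v
  have hI : (∫ t in (0:ℝ)..T, g t * g t) = 0 := by
    rw [← dot_gram, hv, dotProduct_zero]
  have hae : (fun t => g t * g t) =ᵐ[volume.restrict (Set.Ioc (0:ℝ) T)] 0 := by
    refine (intervalIntegral.integral_eq_zero_iff_of_le_of_nonneg_ae hT.le ?_ ?_).mp hI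
    · exact Filter.Eventually.of_forall fun t => mul_self_nonneg _
    · exact ((hgc.mul hgc)).intervalIntegrable _ _
  have hIoo : ∀ t ∈ Set.Ioo (0:ℝ) T, g t = 0 := by
    intro t ht
    have := eq_zero_on_Ioo_of_ae (hgc.mul hgc) hae t ht
    exact mul_self_eq_zero.mp this
  exact dot_traj_eq_zero_everywhere hT hIoo

lemma gram_mulVec_zero_of_dot_traj_zero {A : Matrix (Fin n) (Fin n) ℝ} {x₀ v : Fin n → ℝ}
    {T : ℝ} (h : ∀ t : ℝ, v ⬝ᵥ ((NormedSpace.exp (t • A)) *ᵥ x₀) = 0) :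
    (Matrix.of fun i j : Fin n =>
        ∫ t in (0:ℝ)..T,
          (NormedSpace.exp (t • A)).mulVec x₀ i
            * (NormedSpace.exp (t • A)).mulVec x₀ j) *ᵥ v = 0 := by
  rw [gram_mulVec]
  funext i
  simp [h]

end aux4

section aux5
open NormedSpace Matrix Set

variable {n : ℕ}

lemma vecMulVec_mulVec' (v w : Fin n → ℝ) :
    Matrix.vecMulVec v v *ᵥ w = fun i => v i * (v ⬝ᵥ w) := by
  funext i
  simp [Matrix.mulVec, Matrix.vecMulVec_apply, dotProduct, Finset.mul_sum, mul_assoc]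

lemma pert_ne {v : Fin n → ℝ} (hv : v ≠ 0) (A : Matrix (Fin n) (Fin n) ℝ) :
    A + Matrix.vecMulVec v v ≠ A := by
  intro h
  have hC : Matrix.vecMulVec v v = 0 := by
    have := congrArg (fun M => M - A) h
    simpa [add_sub_cancel_left] using this
  obtain ⟨i, hi⟩ := Function.ne_iff.mp hv
  have h2 : v i * v i = 0 := by
    simpa [Matrix.vecMulVec_apply] using congrFun (congrFun hC i) i
  exact hi (mul_self_eq_zero.mp h2)

lemma traj_eq_of_pert {A : Matrix (Fin n) (Fin n) ℝ} {x₀ v : Fin n → ℝ}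
    (h : ∀ t : ℝ, v ⬝ᵥ ((NormedSpace.exp (t • A)) *ᵥ x₀) = 0) (t : ℝ) :
    (NormedSpace.exp (t • (A + Matrix.vecMulVec v v))) *ᵥ x₀
      = (NormedSpace.exp (t • A)) *ᵥ x₀ := by
  letI : SeminormedRing (Matrix (Fin n) (Fin n) ℝ) := Matrix.linftyOpSemiNormedRing
  letI : NormedRing (Matrix (Fin n) (Fin n) ℝ) := Matrix.linftyOpNormedRing
  letI : NormedAlgebra ℝ (Matrix (Fin n) (Fin n) ℝ) := Matrix.linftyOpNormedAlgebra
  set B : Matrix (Fin n) (Fin n) ℝ := A + Matrix.vecMulVec v v with hB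
  have hkey : ∀ s : ℝ, (A - B) *ᵥ ((NormedSpace.exp (s • A)) *ᵥ x₀) = 0 := by
    intro s
    have : A - B = -(Matrix.vecMulVec v v) := by rw [hB]; abel
    rw [this, Matrix.neg_mulVec, vecMulVec_mulVec', neg_eq_zero]
    funext i
    simp [h s]
  -- the auxiliary function is constant
  have hder : ∀ s : ℝ, HasDerivAt
      (fun u : ℝ => (NormedSpace.exp (u • (-B)) * NormedSpace.exp (u • A)) *ᵥ x₀) 0 s := by
    intro s
    have h1 := hasDerivAt_exp_smul_const' (𝕂 := ℝ) (-B) s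
    have h2 := hasDerivAt_exp_smul_const (𝕂 := ℝ) A s
    have h3 := h1.mul h2
    have h4 := ((mulVecCLM x₀).hasFDerivAt.comp_hasDerivAt s h3)
    have c1 : (-B) * NormedSpace.exp (s • (-B))
        = NormedSpace.exp (s • (-B)) * (-B) :=
      (((Commute.refl (-B)).smul_right s).exp_right).eq
    have c2 : NormedSpace.exp (s • A) * A = A * NormedSpace.exp (s • A) :=
      ((((Commute.refl A).smul_left s).exp_left).eq)
    have hzero : ((-B) * NormedSpace.exp (s • (-B)) * NormedSpace.exp (s • A)
        + NormedSpace.exp (s • (-B)) * (NormedSpace.exp (s • A) * A)) *ᵥ x₀ = 0 := by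
      have hre : (-B) * NormedSpace.exp (s • (-B)) * NormedSpace.exp (s • A)
          + NormedSpace.exp (s • (-B)) * (NormedSpace.exp (s • A) * A)
          = NormedSpace.exp (s • (-B)) * ((A - B) * NormedSpace.exp (s • A)) := by
        rw [c1, c2]
        noncomm_ring
      rw [hre, ← Matrix.mulVec_mulVec, ← Matrix.mulVec_mulVec, hkey s, Matrix.mulVec_zero]
    have h5 : HasDerivAt
        (fun u : ℝ => (NormedSpace.exp (u • (-B)) * NormedSpace.exp (u • A)) *ᵥ x₀)
        (((-B) * NormedSpace.exp (s • (-B)) * NormedSpace.exp (s • A)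
          + NormedSpace.exp (s • (-B)) * (NormedSpace.exp (s • A) * A)) *ᵥ x₀) s := h4
    rw [hzero] at h5
    exact h5
  have hdiff : Differentiable ℝ
      (fun u : ℝ => (NormedSpace.exp (u • (-B)) * NormedSpace.exp (u • A)) *ᵥ x₀) :=
    fun s => (hder s).differentiableAt
  have hconst : (NormedSpace.exp (t • (-B)) * NormedSpace.exp (t • A)) *ᵥ x₀ = x₀ := by
    have := is_const_of_deriv_eq_zero hdiff (fun s => (hder s).deriv) t 0
    simpa [NormedSpace.exp_zero] using this
  have hcomm : Commute (t • B) (t • (-B)) := by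
    have : t • (-B) = -(t • B) := by rw [smul_neg]
    rw [this]
    exact (Commute.refl (t • B)).neg_right
  have hinv : NormedSpace.exp (t • B) * NormedSpace.exp (t • (-B)) = 1 := by
    rw [← Matrix.exp_add_of_commute _ _ hcomm]
    have : t • B + t • (-B) = 0 := by rw [smul_neg]; exact add_neg_cancel _
    rw [this, NormedSpace.exp_zero]
  calc (NormedSpace.exp (t • B)) *ᵥ x₀
      = (NormedSpace.exp (t • B)) *ᵥ
          ((NormedSpace.exp (t • (-B)) * NormedSpace.exp (t • A)) *ᵥ x₀) := by rw [hconst]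
    _ = ((NormedSpace.exp (t • B) * NormedSpace.exp (t • (-B)))
          * NormedSpace.exp (t • A)) *ᵥ x₀ := by
        rw [Matrix.mulVec_mulVec, mul_assoc]
    _ = (NormedSpace.exp (t • A)) *ᵥ x₀ := by rw [hinv, one_mul]

lemma mulVec_traj_eq {A B : Matrix (Fin n) (Fin n) ℝ} {x₀ : Fin n → ℝ}
    (htraj : ∀ t : ℝ, (NormedSpace.exp (t • B)) *ᵥ x₀ = (NormedSpace.exp (t • A)) *ᵥ x₀)
    (t : ℝ) :
    B *ᵥ ((NormedSpace.exp (t • A)) *ᵥ x₀) = A *ᵥ ((NormedSpace.exp (t • A)) *ᵥ x₀) := by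
  have h1 := hasDerivAt_traj B x₀ t
  have heq : (fun s : ℝ => (NormedSpace.exp (s • B)) *ᵥ x₀)
      = fun s : ℝ => (NormedSpace.exp (s • A)) *ᵥ x₀ := funext htraj
  rw [heq] at h1
  have h2 := h1.unique (hasDerivAt_traj A x₀ t)
  rw [← Matrix.mulVec_mulVec, ← Matrix.mulVec_mulVec, htraj t] at h2
  exact h2

end aux5

open Matrix in
/-- Gram-matrix criterion: with `x (t) = exp (t A) x₀` and
`Σ i j = ∫₀ᵀ xᵢ (t) xⱼ (t) dt` (for some `T > 0`), the system `A` is identifiable from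
`x₀` if and only if `Σ` is invertible. -/
theorem identifiableFrom_iff_gram_isUnit (n : ℕ)
    (A : Matrix (Fin n) (Fin n) ℝ) (x₀ : Fin n → ℝ) (T : ℝ) (hT : 0 < T) :
    IdentifiableFrom A x₀ ↔
      IsUnit (Matrix.of fun i j : Fin n =>
        ∫ t in (0 : ℝ)..T,
          (NormedSpace.exp (t • A)).mulVec x₀ i
            * (NormedSpace.exp (t • A)).mulVec x₀ j) := by
  set Sm : Matrix (Fin n) (Fin n) ℝ := Matrix.of fun i j : Fin n =>
    ∫ t in (0 : ℝ)..T,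
      (NormedSpace.exp (t • A)).mulVec x₀ i
        * (NormedSpace.exp (t • A)).mulVec x₀ j with hSm
  constructor
  · intro hid
    by_contra hU
    have hdet : Sm.det = 0 := by
      by_contra hd
      exact hU ((Matrix.isUnit_iff_isUnit_det _).mpr (isUnit_iff_ne_zero.mpr hd))
    obtain ⟨v, hv0, hSv⟩ := Matrix.exists_mulVec_eq_zero_iff.mpr hdet
    rw [hSm] at hSv
    have hall := dot_traj_zero_of_gram_mulVec_zero hT hSv
    exact hid ⟨A + Matrix.vecMulVec v v, pert_ne hv0 A, traj_eq_of_pert hall⟩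
  · intro hU
    rintro ⟨B, hBA, htraj⟩
    apply hBA
    have hdet := (Matrix.isUnit_iff_isUnit_det _).mp hU
    ext i j
    set w : Fin n → ℝ := B i - A i with hw
    have hrow : ∀ t : ℝ, w ⬝ᵥ ((NormedSpace.exp (t • A)) *ᵥ x₀) = 0 := by
      intro t
      have key := congrFun (mulVec_traj_eq htraj t) i
      have h1 : (B *ᵥ ((NormedSpace.exp (t • A)) *ᵥ x₀)) i
          = B i ⬝ᵥ ((NormedSpace.exp (t • A)) *ᵥ x₀) := rfl
      have h2 : (A *ᵥ ((NormedSpace.exp (t • A)) *ᵥ x₀)) i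
          = A i ⬝ᵥ ((NormedSpace.exp (t • A)) *ᵥ x₀) := rfl
      rw [hw, sub_dotProduct, ← h1, ← h2, key, sub_self]
    have hSw : Sm *ᵥ w = 0 := by
      rw [hSm]
      exact gram_mulVec_zero_of_dot_traj_zero hrow
    have hw0 : w = 0 := by
      have h1 : Sm⁻¹ *ᵥ (Sm *ᵥ w) = w := by
        rw [Matrix.mulVec_mulVec, Matrix.nonsing_inv_mul _ hdet, Matrix.one_mulVec]
      rw [← h1, hSw, Matrix.mulVec_zero]
    have := congrFun hw0 j
    simpa [hw, sub_eq_zero] using this
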